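/- If X is a random variable with E X = 0, Var(X) = 1, density p, and finite entropic distance D(X) to the standard normal, then for all T > 0, ∫_{|x| ≥ T} x² p(x) dx ≤ 4 D(X) + 4 e^{−T²/4}. -/

import Mathlib

open Real MeasureTheory Set

noncomputable def stdGaussianDensity (t : ℝ) : ℝ :=
  (Real.sqrt (2 * Real.pi))⁻¹ * Real.exp (-t ^ 2 / 2)

lemma sqrt2pi_pos : 0 < Real.sqrt (2 * Real.pi) :=
  Real.sqrt_pos.mpr (by positivity)

lemma phi_pos (x : ℝ) : 0 < stdGaussianDensity x := by
  unfold stdGaussianDensity; positivity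

lemma phi_integrable : Integrable stdGaussianDensity := by
  unfold stdGaussianDensity
  refine (Integrable.const_mul ?_ _)
  have := integrable_exp_neg_mul_sq (b := (1:ℝ)/2) (by norm_num)
  convert this using 2 with x
  ring_nf

lemma phi_integral : ∫ x, stdGaussianDensity x = 1 := by
  unfold stdGaussianDensity
  rw [integral_const_mul]
  have h := integral_gaussian ((1:ℝ)/2)
  have h2 : ∫ x : ℝ, Real.exp (-x ^ 2 / 2) = Real.sqrt (2 * Real.pi) := by
    rw [show (2 * Real.pi) = Real.pi / (1/2) by ring, ← h]
    congr 1 with x; ring_nf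
  rw [h2, inv_mul_cancel₀ (ne_of_gt sqrt2pi_pos)]

/-- pointwise Gibbs: `p - φ ≤ p log (p/φ)` when `p ≥ 0`. -/
lemma gibbs_pointwise {a b : ℝ} (ha : 0 ≤ a) (hb : 0 < b) :
    a - b ≤ a * Real.log (a / b) := by
  rcases eq_or_lt_of_le ha with h | h
  · simp [← h, hb.le]
  · have hu : 0 < a / b := div_pos h hb
    have := Real.log_le_sub_one_of_pos (by positivity : 0 < b / a)
    have h2 : Real.log (b/a) = - Real.log (a/b) := by
      rw [← Real.log_inv]; congr 1; field_simp
    rw [h2] at this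
    have h3 : a * (-Real.log (a/b)) ≤ a * (b/a - 1) := mul_le_mul_of_nonneg_left this h.le
    have hba : a * (b / a) = b := by field_simp
    nlinarith [h3, hba]

/-- key pointwise inequality. -/
lemma key_pointwise {a b t : ℝ} (ha : 0 ≤ a) (hb : 0 < b) :
    t * a ≤ (a * Real.log (a / b) - a + b) + b * Real.exp t := by
  rcases eq_or_lt_of_le ha with h | h
  · subst h
    simp
    positivity
  · have hu : 0 < a / b := div_pos h hb
    have h1 : t - Real.log (a/b) + 1 ≤ Real.exp (t - Real.log (a/b)) :=
      Real.add_one_le_exp _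
    have h2 : Real.exp (t - Real.log (a/b)) = Real.exp t / (a/b) := by
      rw [Real.exp_sub, Real.exp_log hu]
    rw [h2] at h1
    have h3 : (a/b) * (t - Real.log (a/b) + 1) ≤ Real.exp t := by
      calc (a/b) * (t - Real.log (a/b) + 1) ≤ (a/b) * (Real.exp t / (a/b)) :=
            mul_le_mul_of_nonneg_left h1 hu.le
        _ = Real.exp t := by first | (field_simp; ring) | field_simp
    have h4 : a * (t - Real.log (a/b) + 1) ≤ b * Real.exp t := by
      have := mul_le_mul_of_nonneg_left h3 hb.le
      calc a * (t - Real.log (a/b) + 1) = b * ((a/b) * (t - Real.log (a/b) + 1)) := by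
            first | (field_simp; ring) | field_simp
        _ ≤ b * Real.exp t := this
    nlinarith [h4]

lemma exp_shift_integral {T : ℝ} (hT : 0 < T) :
    ∫ x in Ioi T, Real.exp (-(T/2) * (x - T)) = 2 / T := by
  have hderiv : ∀ x ∈ Ioi T, HasDerivAt (fun x => -(2/T) * Real.exp (-(T/2) * (x - T)))
      (Real.exp (-(T/2) * (x - T))) x := by
    intro x _
    have h1 : HasDerivAt (fun x : ℝ => -(T/2) * (x - T)) (-(T/2)) x := by
      simpa using ((hasDerivAt_id x).sub_const T).const_mul (-(T/2))
    have h2 := (h1.exp).const_mul (-(2/T))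
    refine h2.congr_deriv ?_
    have hk : (T/2) * (2/T) = 1 := by field_simp
    linear_combination (Real.exp (-(T/2) * (x - T))) * hk
  have hint : IntegrableOn (fun x => Real.exp (-(T/2) * (x - T))) (Ioi T) := by
    have h := exp_neg_integrableOn_Ioi T (half_pos hT)
    have : (fun x => Real.exp (-(T/2) * (x - T)))
        = fun x => Real.exp (T^2/2) * Real.exp (-(T/2) * x) := by
      funext x; rw [← Real.exp_add]; ring_nf
    rw [this]
    exact (h.const_mul _)
  have htend : Filter.Tendsto (fun x => -(2/T) * Real.exp (-(T/2) * (x - T)))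
      Filter.atTop (nhds 0) := by
    have : Filter.Tendsto (fun x : ℝ => -(T/2) * (x - T)) Filter.atTop Filter.atBot := by
      apply Filter.Tendsto.const_mul_atTop_of_neg (by linarith : -(T/2) < 0)
      exact Filter.tendsto_atTop_add_const_right _ _ Filter.tendsto_id
    have := (Real.tendsto_exp_atBot.comp this).const_mul (-(2/T))
    simpa using this
  have hcont : ContinuousWithinAt (fun x => -(2/T) * Real.exp (-(T/2) * (x - T))) (Ici T) T :=
    Continuous.continuousWithinAt (by continuity)
  have := integral_Ioi_of_hasDerivAt_of_tendsto hcont hderiv hint htend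
  rw [this]; simp

lemma exp_quarter_tail {T : ℝ} (hT : 0 < T) :
    ∫ x in Ioi T, Real.exp (-x^2/4) ≤ (2/T) * Real.exp (-T^2/4) := by
  have hint1 : IntegrableOn (fun x => Real.exp (-x^2/4)) (Ioi T) := by
    have := integrable_exp_neg_mul_sq (b := (1:ℝ)/4) (by norm_num)
    have h2 : (fun x : ℝ => Real.exp (-x^2/4)) = fun x => Real.exp (-(1/4) * x^2) := by
      funext x; ring_nf
    rw [h2]; exact this.integrableOn
  have hint2 : IntegrableOn (fun x => Real.exp (-T^2/4) * Real.exp (-(T/2) * (x - T))) (Ioi T) := by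
    have h := exp_neg_integrableOn_Ioi T (half_pos hT)
    have : (fun x => Real.exp (-T^2/4) * Real.exp (-(T/2) * (x - T)))
        = fun x => (Real.exp (-T^2/4) * Real.exp (T^2/2)) * Real.exp (-(T/2) * x) := by
      funext x; simp only [← Real.exp_add]; congr 1; ring
    rw [this]
    exact (h.const_mul _)
  calc ∫ x in Ioi T, Real.exp (-x^2/4)
      ≤ ∫ x in Ioi T, Real.exp (-T^2/4) * Real.exp (-(T/2) * (x - T)) := by
        apply setIntegral_mono_on hint1 hint2 measurableSet_Ioi
        intro x hx
        rw [← Real.exp_add]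
        apply Real.exp_le_exp.mpr
        have hx' : T ≤ x := le_of_lt hx
        nlinarith [sq_nonneg (x - T)]
    _ = (2/T) * Real.exp (-T^2/4) := by
        rw [integral_const_mul, exp_shift_integral hT]; ring

/-- Entropic distance (relative entropy) of a density `p` to the standard normal. -/
noncomputable def entDist (p : ℝ → ℝ) : ℝ :=
  ∫ x, p x * Real.log (p x / stdGaussianDensity x)

lemma exp_quarter_integrable : Integrable (fun x : ℝ => Real.exp (-x^2/4)) := by
  have := integrable_exp_neg_mul_sq (b := (1:ℝ)/4) (by norm_num)
  have h2 : (fun x : ℝ => Real.exp (-x^2/4)) = fun x => Real.exp (-(1/4) * x^2) := by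
    funext x; ring_nf
  rw [h2]; exact this

lemma sqrt2pi_ge_two : (2:ℝ) ≤ Real.sqrt (2 * Real.pi) := by
  have h4 : (4:ℝ) ≤ 2 * Real.pi := by nlinarith [Real.pi_gt_three]
  have h5 := Real.sqrt_le_sqrt h4
  have h6 : Real.sqrt 4 = 2 := by
    rw [show (4:ℝ) = 2^2 by norm_num, Real.sqrt_sq (by norm_num : (0:ℝ) ≤ 2)]
  linarith

theorem stmt_10 (p : ℝ → ℝ) (hmeas : Measurable p) (hp0 : ∀ x, 0 ≤ p x)
    (hp1 : ∫ x, p x = 1)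
    (hmean : ∫ x, x * p x = 0) (hmom : Integrable (fun x => x ^ 2 * p x))
    (hvar : ∫ x, x ^ 2 * p x = 1)
    (hD : Integrable (fun x => p x * Real.log (p x / stdGaussianDensity x)))
    (T : ℝ) (hT : 0 < T) :
    ∫ x in {x : ℝ | T ≤ |x|}, x ^ 2 * p x
      ≤ 4 * entDist p + 4 * Real.exp (-T ^ 2 / 4) := by
  have hp_int : Integrable p := by
    by_contra h
    rw [integral_undef h] at hp1; exact zero_ne_one hp1
  have hφint := phi_integrable
  set c : ℝ := (Real.sqrt (2 * Real.pi))⁻¹ with hc_def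
  have hc : 0 < c := inv_pos.mpr sqrt2pi_pos
  have hc2 : c ≤ 1/2 := by
    rw [hc_def]
    rw [inv_le_comm₀ (sqrt2pi_pos) (by norm_num : (0:ℝ) < 1/2)]
    simpa using sqrt2pi_ge_two
  set A := {x : ℝ | T ≤ |x|} with hAdef
  have hAeq : A = Iic (-T) ∪ Ici T := by
    ext x
    simp only [hAdef, mem_setOf_eq, mem_union, mem_Iic, mem_Ici, le_abs]
    constructor
    · rintro (h | h); · right; exact h
      · left; linarith
    · rintro (h | h); · right; linarith
      · left; exact h
  have hAmeas : MeasurableSet A := by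
    rw [hAeq]; exact measurableSet_Iic.union measurableSet_Ici
  -- nonnegativity of entDist
  have hD0 : 0 ≤ entDist p := by
    have hmono : ∀ x, p x - stdGaussianDensity x
        ≤ p x * Real.log (p x / stdGaussianDensity x) :=
      fun x => gibbs_pointwise (hp0 x) (phi_pos x)
    have h := integral_mono (hp_int.sub hφint) hD hmono
    simp only [Pi.sub_apply] at h
    rw [integral_sub hp_int hφint, hp1, phi_integral, sub_self] at h
    exact h
  rcases le_or_gt 2 T with h2T | h2T
  · -- main branch
    set G : ℝ → ℝ := fun x =>
      p x * Real.log (p x / stdGaussianDensity x) - p x + stdGaussianDensity x with hGdef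
    have hGint : Integrable G := (hD.sub hp_int).add hφint
    have hG0 : ∀ x, 0 ≤ G x := by
      intro x
      have := gibbs_pointwise (hp0 x) (phi_pos x)
      simp only [hGdef]; linarith
    set H : ℝ → ℝ := fun x => c * Real.exp (-x^2/4) with hHdef
    have hHint : Integrable H := exp_quarter_integrable.const_mul c
    have hkey : ∀ x, x^2 * p x ≤ 4 * (G x + H x) := by
      intro x
      have h := key_pointwise (t := x^2/4) (hp0 x) (phi_pos x)
      have heq : stdGaussianDensity x * Real.exp (x^2/4) = c * Real.exp (-x^2/4) := by
        unfold stdGaussianDensity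
        rw [mul_assoc, ← Real.exp_add, ← hc_def]
        congr 1; ring
      rw [heq] at h
      simp only [hGdef, hHdef]
      linarith
    have step1 : ∫ x in A, x^2 * p x ≤ ∫ x in A, 4 * (G x + H x) :=
      setIntegral_mono_on hmom.integrableOn (((hGint.add hHint).const_mul 4).integrableOn)
        hAmeas (fun x _ => hkey x)
    have step2 : ∫ x in A, 4 * (G x + H x)
        = 4 * ((∫ x in A, G x) + ∫ x in A, H x) := by
      rw [integral_const_mul, integral_add hGint.integrableOn hHint.integrableOn]
    have step3 : ∫ x in A, G x ≤ entDist p := by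
      have h1 : ∫ x in A, G x ≤ ∫ x, G x :=
        setIntegral_le_integral hGint (Filter.Eventually.of_forall hG0)
      have h2 : ∫ x, G x = entDist p := by
        simp only [hGdef]
        have e1 := integral_add
          (f := fun x => p x * Real.log (p x / stdGaussianDensity x) - p x)
          (g := stdGaussianDensity) (hD.sub hp_int) hφint
        have e2 := integral_sub
          (f := fun x => p x * Real.log (p x / stdGaussianDensity x)) (g := p) hD hp_int
        rw [e1, e2, hp1, phi_integral]
        unfold entDist; ring
      linarith
    have step4 : ∫ x in A, H x ≤ Real.exp (-T^2/4) := by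
      have hsplit : ∫ x in A, Real.exp (-x^2/4)
          = (∫ x in Iic (-T), Real.exp (-x^2/4)) + ∫ x in Ici T, Real.exp (-x^2/4) := by
        rw [hAeq]
        exact setIntegral_union (Iic_disjoint_Ici.mpr (not_le.mpr (by linarith)))
          measurableSet_Ici exp_quarter_integrable.integrableOn
          exp_quarter_integrable.integrableOn
      have hleft : ∫ x in Iic (-T), Real.exp (-x^2/4)
          = ∫ x in Ioi T, Real.exp (-x^2/4) := by
        have h := integral_comp_neg_Iic (-T) (fun x => Real.exp (-x^2/4))
        simp only [neg_neg] at h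
        rw [← h]
        congr 1 with x
        rw [neg_sq]
      have hright : ∫ x in Ici T, Real.exp (-x^2/4)
          = ∫ x in Ioi T, Real.exp (-x^2/4) := integral_Ici_eq_integral_Ioi
      have htail := exp_quarter_tail hT
      have hHA : ∫ x in A, H x = c * ∫ x in A, Real.exp (-x^2/4) := by
        simp only [hHdef]; exact integral_const_mul c _
      rw [hHA, hsplit, hleft, hright]
      have hE : 0 < Real.exp (-T^2/4) := Real.exp_pos _
      have hT2 : 2/T ≤ 1 := by
        rw [div_le_one hT]; linarith
      calc c * ((∫ x in Ioi T, Real.exp (-x^2/4)) + ∫ x in Ioi T, Real.exp (-x^2/4))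
          ≤ c * ((2/T) * Real.exp (-T^2/4) + (2/T) * Real.exp (-T^2/4)) :=
            mul_le_mul_of_nonneg_left (add_le_add htail htail) hc.le
        _ ≤ (1/2) * (1 * Real.exp (-T^2/4) + 1 * Real.exp (-T^2/4)) := by
            have hp1' : (0:ℝ) ≤ 2/T := div_nonneg (by norm_num) hT.le
            exact mul_le_mul hc2
              (by nlinarith [mul_le_mul_of_nonneg_right hT2 hE.le])
              (add_nonneg (mul_nonneg hp1' hE.le) (mul_nonneg hp1' hE.le)) (by norm_num)
        _ = Real.exp (-T^2/4) := by ring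
    have hfin : (-T^2/4 : ℝ) = -T^2/4 := rfl
    have : ∫ x in A, x^2 * p x ≤ 4 * entDist p + 4 * Real.exp (-T^2/4) := by
      rw [step2] at step1
      nlinarith [step1, step3, step4]
    simpa [hAdef] using this
  · -- small T branch
    have hLHS : ∫ x in A, x^2 * p x ≤ 1 := by
      rw [← hvar]
      exact setIntegral_le_integral hmom
        (Filter.Eventually.of_forall fun x => mul_nonneg (by positivity) (hp0 x))
    have h1 : Real.exp (-1) ≤ Real.exp (-T^2/4) := Real.exp_le_exp.mpr (by nlinarith)
    have h4 : Real.exp 1 ≤ 4 := by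
      have := Real.exp_one_lt_d9; linarith
    have h2 : (4:ℝ)⁻¹ ≤ Real.exp (-1) := by
      rw [Real.exp_neg]
      exact inv_anti₀ (Real.exp_pos 1) h4
    have : ∫ x in A, x^2 * p x ≤ 4 * entDist p + 4 * Real.exp (-T^2/4) := by
      nlinarith
    simpa [hAdef] using this
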